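/- Let Ω ⊂ ℝⁿ be open, 𝓘(t) bounded, G ∈ C_b(Ω_𝓘 × 𝕋ⁿ), and f₀ ∈ C_c(Ω × 𝕋ⁿ) (continuous with compact support). Then for each fixed t, the double series-integral ∫_Ω Σ_{n⃗ ∈ ℤⁿ} |Ĝ(I + 𝓘(t), n⃗)| · |f̂₀(I, −n⃗)| dI is finite. -/

import Mathlib

/-!
In `L²` of the normalized measure on the fundamental domain `[0, 2π)ⁿ` the characters
`θ ↦ e^{i⟨v, θ⟩}` are orthonormal and `fourierCoeff'` is the inner product against them, so
Bessel's inequality gives `∑_v |ĝ(v)|² ≤ sup |g|²` for every bounded measurable `g`.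
With `ab ≤ a² + b²` the integrand is therefore bounded by `sup |G|² + sup |f₀|²` uniformly in `I`,
and it vanishes outside the compact projection of `supp f₀`, so the integral is finite.
-/

open MeasureTheory Filter Finset

/-- The fundamental domain `[0, 2π)ⁿ` of the torus `𝕋ⁿ = ℝⁿ/2πℤⁿ`. -/
def torusBox (n : ℕ) : Set (Fin n → ℝ) := Set.univ.pi fun _ => Set.Ico (0:ℝ) (2 * Real.pi)

/-- Fourier coefficient in the angle variable. -/
noncomputable def fourierCoeff' {n : ℕ} (G : (Fin n → ℝ) → (Fin n → ℝ) → ℂ)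
    (I : Fin n → ℝ) (v : Fin n → ℤ) : ℂ :=
  ((2 * Real.pi) ^ n : ℝ)⁻¹ •
    ∫ θ in torusBox n, G I θ * Complex.exp (-(Complex.I * ((∑ i, (v i : ℝ) * θ i : ℝ) : ℂ)))

open scoped ComplexConjugate ENNReal

lemma MeasureTheory.MemLp.inner_toLp_toLp {α 𝕜 : Type*} [MeasurableSpace α] {μ : Measure α}
    [RCLike 𝕜] {f g : α → 𝕜} (hf : MemLp f 2 μ) (hg : MemLp g 2 μ) :
    inner 𝕜 (hf.toLp f) (hg.toLp g) = ∫ x, conj (f x) * g x ∂μ := by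
  rw [L2.inner_def]
  refine integral_congr_ae ?_
  filter_upwards [hf.coeFn_toLp, hg.coeFn_toLp] with x hfx hgx
  rw [hfx, hgx, RCLike.inner_apply, mul_comm]

lemma ENNReal.tsum_mul_le_tsum_sq_add_tsum_sq {ι : Type*} (a b : ι → ℝ≥0∞) :
    ∑' i, a i * b i ≤ ∑' i, a i ^ 2 + ∑' i, b i ^ 2 := by
  rw [← ENNReal.tsum_add]
  refine ENNReal.tsum_le_tsum fun i => ?_
  rcases le_total (a i) (b i) with h | h
  · calc a i * b i ≤ b i ^ 2 := by rw [sq]; gcongr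
      _ ≤ a i ^ 2 + b i ^ 2 := le_add_self
  · calc a i * b i ≤ a i ^ 2 := by rw [sq]; gcongr
      _ ≤ a i ^ 2 + b i ^ 2 := le_self_add

lemma integral_Ico_exp_I_int_mul (k : ℤ) :
    ∫ x in Set.Ico (0 : ℝ) (2 * Real.pi), Complex.exp (Complex.I * k * x)
      = if k = 0 then ((2 * Real.pi : ℝ) : ℂ) else 0 := by
  rw [setIntegral_congr_set Ico_ae_eq_Ioc, ← intervalIntegral.integral_of_le Real.two_pi_pos.le]
  split_ifs with hk
  · simp [hk, Complex.real_smul]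
  · have hc : Complex.I * k ≠ 0 := mul_ne_zero Complex.I_ne_zero (by exact_mod_cast hk)
    have hperiod : Complex.I * k * ((2 * Real.pi : ℝ) : ℂ) = k * (2 * Real.pi * Complex.I) := by
      push_cast; ring
    rw [integral_exp_mul_complex hc, hperiod, Complex.exp_int_mul_two_pi_mul_I]
    simp

section TorusFourier

variable {n : ℕ}

lemma volume_torusBox : volume (torusBox n) = ENNReal.ofReal ((2 * Real.pi) ^ n) := by
  rw [torusBox, volume_pi_pi]
  simp [Real.volume_Ico, ENNReal.ofReal_pow Real.two_pi_pos.le]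

lemma setIntegral_torusBox_prod {𝕜 : Type*} [RCLike 𝕜] (f : Fin n → ℝ → 𝕜) :
    ∫ θ in torusBox n, ∏ i, f i (θ i) = ∏ i, ∫ x in Set.Ico (0 : ℝ) (2 * Real.pi), f i x := by
  rw [torusBox, volume_pi, Measure.restrict_pi_pi, integral_fintype_prod_eq_prod]

noncomputable def torusMeasure (n : ℕ) : Measure (Fin n → ℝ) :=
  ENNReal.ofReal ((2 * Real.pi) ^ n)⁻¹ • volume.restrict (torusBox n)

instance : IsProbabilityMeasure (torusMeasure n) := by
  constructor
  rw [torusMeasure, Measure.smul_apply, Measure.restrict_apply_univ, volume_torusBox, smul_eq_mul,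
    ← ENNReal.ofReal_mul (by positivity), inv_mul_cancel₀ (by positivity), ENNReal.ofReal_one]

lemma integral_torusMeasure {E : Type*} [NormedAddCommGroup E] [NormedSpace ℝ E]
    (f : (Fin n → ℝ) → E) :
    ∫ θ, f θ ∂torusMeasure n = ((2 * Real.pi) ^ n : ℝ)⁻¹ • ∫ θ in torusBox n, f θ := by
  rw [torusMeasure, integral_smul_measure, ENNReal.toReal_ofReal (by positivity)]

noncomputable def torusChar (v : Fin n → ℤ) (θ : Fin n → ℝ) : ℂ :=
  Complex.exp (Complex.I * ((∑ i, (v i : ℝ) * θ i : ℝ) : ℂ))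

lemma norm_torusChar (v : Fin n → ℤ) (θ : Fin n → ℝ) : ‖torusChar v θ‖ = 1 :=
  Complex.norm_exp_I_mul_ofReal _

lemma continuous_torusChar (v : Fin n → ℤ) : Continuous (torusChar v) := by
  unfold torusChar; fun_prop

lemma memLp_torusChar (v : Fin n → ℤ) : MemLp (torusChar v) 2 (torusMeasure n) :=
  MemLp.of_bound (continuous_torusChar v).aestronglyMeasurable 1
    (ae_of_all _ fun θ => (norm_torusChar v θ).le)

lemma conj_torusChar (v : Fin n → ℤ) (θ : Fin n → ℝ) :
    conj (torusChar v θ) = Complex.exp (-(Complex.I * ((∑ i, (v i : ℝ) * θ i : ℝ) : ℂ))) := by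
  rw [torusChar, ← Complex.exp_conj]
  simp

lemma conj_torusChar_mul (v w : Fin n → ℤ) (θ : Fin n → ℝ) :
    conj (torusChar v θ) * torusChar w θ = torusChar (w - v) θ := by
  rw [conj_torusChar, torusChar, torusChar, ← Complex.exp_add]
  congr 1
  simp only [Pi.sub_apply, Int.cast_sub, sub_mul, Finset.sum_sub_distrib]
  push_cast
  ring

lemma torusChar_eq_prod (v : Fin n → ℤ) (θ : Fin n → ℝ) :
    torusChar v θ = ∏ i, Complex.exp (Complex.I * v i * θ i) := by
  rw [torusChar, ← Complex.exp_sum]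
  push_cast
  simp only [Finset.mul_sum, mul_assoc]

lemma integral_torusChar (v : Fin n → ℤ) :
    ∫ θ, torusChar v θ ∂torusMeasure n = if v = 0 then 1 else 0 := by
  simp_rw [integral_torusMeasure, torusChar_eq_prod,
    setIntegral_torusBox_prod fun i x => Complex.exp (Complex.I * v i * x),
    integral_Ico_exp_I_int_mul, Finset.prod_ite_zero]
  by_cases hv : v = 0
  · subst hv
    simp [Complex.real_smul]
  · simpa [hv] using Function.ne_iff.mp hv

lemma orthonormal_torusChar :
    Orthonormal ℂ fun v : Fin n → ℤ => (memLp_torusChar v).toLp (torusChar v) := by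
  rw [orthonormal_iff_ite]
  intro v w
  simp_rw [MemLp.inner_toLp_toLp, conj_torusChar_mul, integral_torusChar, sub_eq_zero, eq_comm]

lemma fourierCoeff'_eq_inner (G : (Fin n → ℝ) → (Fin n → ℝ) → ℂ) (I : Fin n → ℝ)
    (hG : MemLp (G I) 2 (torusMeasure n)) (v : Fin n → ℤ) :
    fourierCoeff' G I v = inner ℂ ((memLp_torusChar v).toLp (torusChar v)) (hG.toLp (G I)) := by
  simp_rw [MemLp.inner_toLp_toLp, integral_torusMeasure, conj_torusChar, fourierCoeff', mul_comm]

lemma fourierCoeff'_eq_zero {G : (Fin n → ℝ) → (Fin n → ℝ) → ℂ} {I : Fin n → ℝ}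
    (hG : ∀ θ, G I θ = 0) (v : Fin n → ℤ) : fourierCoeff' G I v = 0 := by
  simp [fourierCoeff', hG]

lemma tsum_sq_nnnorm_fourierCoeff'_le {G : (Fin n → ℝ) → (Fin n → ℝ) → ℂ} {I : Fin n → ℝ}
    {M : ℝ} (hG : AEStronglyMeasurable (G I) (torusMeasure n)) (hM : ∀ θ, ‖G I θ‖ ≤ M) :
    ∑' v, (‖fourierCoeff' G I v‖₊ : ℝ≥0∞) ^ 2 ≤ ENNReal.ofReal M ^ 2 := by
  have hM0 : 0 ≤ M := (norm_nonneg _).trans (hM 0)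
  have hGL2 : MemLp (G I) 2 (torusMeasure n) := MemLp.of_bound hG M (ae_of_all _ hM)
  set F := hGL2.toLp (G I)
  have hF : ‖F‖ ≤ M := by
    have := Lp.norm_le_of_ae_bound hM0 <| by
      filter_upwards [hGL2.coeFn_toLp] with θ hθ
      exact hθ ▸ hM θ
    rwa [measureUnivNNReal, measure_univ, ENNReal.toNNReal_one, NNReal.coe_one, Real.one_rpow,
      one_mul] at this
  have hsq : ∀ v, (‖fourierCoeff' G I v‖₊ : ℝ≥0∞) ^ 2
      = ENNReal.ofReal (‖inner ℂ ((memLp_torusChar v).toLp (torusChar v)) F‖ ^ 2) := by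
    intro v
    rw [fourierCoeff'_eq_inner G I hGL2, ENNReal.ofReal_pow (norm_nonneg _), ofReal_norm,
      enorm_eq_nnnorm]
  rw [tsum_congr hsq, ← ENNReal.ofReal_tsum_of_nonneg (fun _ => sq_nonneg _)
    (orthonormal_torusChar.inner_products_summable F), ← ENNReal.ofReal_pow hM0]
  exact ENNReal.ofReal_le_ofReal <| (orthonormal_torusChar.tsum_inner_products_le F).trans
    (pow_le_pow_left₀ (norm_nonneg _) hF 2)

lemma tsum_nnnorm_fourierCoeff'_mul_le {G f : (Fin n → ℝ) → (Fin n → ℝ) → ℂ} {J I : Fin n → ℝ}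
    {M Mf : ℝ} (hG : AEStronglyMeasurable (G J) (torusMeasure n)) (hGM : ∀ θ, ‖G J θ‖ ≤ M)
    (hf : AEStronglyMeasurable (f I) (torusMeasure n)) (hfM : ∀ θ, ‖f I θ‖ ≤ Mf) :
    ∑' v, (‖fourierCoeff' G J v‖₊ * ‖fourierCoeff' f I (-v)‖₊ : ℝ≥0∞)
      ≤ ENNReal.ofReal M ^ 2 + ENNReal.ofReal Mf ^ 2 := by
  refine (ENNReal.tsum_mul_le_tsum_sq_add_tsum_sq _ _).trans ?_
  rw [tsum_comp_neg fun v => (‖fourierCoeff' f I v‖₊ : ℝ≥0∞) ^ 2]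
  exact add_le_add (tsum_sq_nnnorm_fourierCoeff'_le hG hGM) (tsum_sq_nnnorm_fourierCoeff'_le hf hfM)

end TorusFourier

theorem fourier_series_integral_finite_general
    {n : ℕ} (Ω : Set (Fin n → ℝ)) (hΩ : IsOpen Ω)
    (𝓘 : ℝ → Fin n → ℝ)
    (Ω𝓘 : Set (Fin n → ℝ))
    (hΩ𝓘 : Ω𝓘 = {x | ∃ I ∈ Ω, ∃ t : ℝ, 0 ≤ t ∧ x = I + 𝓘 t})
    (G : (Fin n → ℝ) → (Fin n → ℝ) → ℂ)
    (hGcont : ContinuousOn (fun q : (Fin n → ℝ) × (Fin n → ℝ) => G q.1 q.2)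
      (Ω𝓘 ×ˢ (Set.univ : Set (Fin n → ℝ))))
    (hGbdd : ∃ M : ℝ, ∀ I ∈ Ω𝓘, ∀ θ, ‖G I θ‖ ≤ M)
    (f₀ : (Fin n → ℝ) → (Fin n → ℝ) → ℂ)
    (hf₀cont : Continuous (fun q : (Fin n → ℝ) × (Fin n → ℝ) => f₀ q.1 q.2))
    (hf₀supp : HasCompactSupport (fun q : (Fin n → ℝ) × (Fin n → ℝ) => f₀ q.1 q.2))
    (t : ℝ) (ht : 0 ≤ t) :
    (∫⁻ I in Ω, ∑' v : Fin n → ℤ,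
        (‖fourierCoeff' G (I + 𝓘 t) v‖₊ * ‖fourierCoeff' f₀ I (-v)‖₊ : ENNReal)) < ⊤ := by
  obtain ⟨M, hM⟩ := hGbdd
  obtain ⟨Mf, hMf⟩ := hf₀cont.bounded_above_of_compact_support hf₀supp
  set K := Prod.fst '' tsupport fun q : (Fin n → ℝ) × (Fin n → ℝ) => f₀ q.1 q.2
  have hK : IsCompact K := hf₀supp.image continuous_fst
  set B := ENNReal.ofReal M ^ 2 + ENNReal.ofReal Mf ^ 2
  have hbound : ∀ I ∈ Ω, ∑' v : Fin n → ℤ,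
      (‖fourierCoeff' G (I + 𝓘 t) v‖₊ * ‖fourierCoeff' f₀ I (-v)‖₊ : ℝ≥0∞)
        ≤ K.indicator (fun _ => B) I := by
    intro I hI
    by_cases hIK : I ∈ K
    · have hJ : I + 𝓘 t ∈ Ω𝓘 := hΩ𝓘 ▸ ⟨I, hI, t, ht, rfl⟩
      rw [Set.indicator_of_mem hIK]
      have hGJ : Continuous (G (I + 𝓘 t)) :=
        hGcont.comp_continuous (continuous_const.prodMk continuous_id) fun _ => ⟨hJ, trivial⟩
      have hf₀I : Continuous (f₀ I) := hf₀cont.comp (continuous_const.prodMk continuous_id)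
      exact tsum_nnnorm_fourierCoeff'_mul_le hGJ.aestronglyMeasurable (hM _ hJ)
        hf₀I.aestronglyMeasurable fun θ => hMf (I, θ)
    · have hf₀I : ∀ θ, f₀ I θ = 0 := fun θ =>
        image_eq_zero_of_notMem_tsupport (x := (I, θ)) fun h => hIK ⟨(I, θ), h, rfl⟩
      simp [fourierCoeff'_eq_zero hf₀I]
  calc _ ≤ ∫⁻ I in Ω, K.indicator (fun _ => B) I := setLIntegral_mono' hΩ.measurableSet hbound
    _ ≤ ∫⁻ I, K.indicator (fun _ => B) I := setLIntegral_le_lintegral _ _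
    _ = B * volume K := lintegral_indicator_const hK.measurableSet B
    _ < ⊤ := ENNReal.mul_lt_top (by finiteness) hK.measure_lt_top

/-- for `G ∈ C_b(Ω_𝓘 × 𝕋ⁿ)` and `f₀ ∈ C_c(Ω × 𝕋ⁿ)`, the quantity
`∫_Ω Σ_{v ∈ ℤⁿ} |Ĝ(I + 𝓘(t), v)| |f̂₀(I, −v)| dI` is finite for each fixed `t ≥ 0`. -/
theorem fourier_series_integral_finite
    {n : ℕ} (Ω : Set (Fin n → ℝ)) (hΩ : IsOpen Ω)
    (𝓘 : ℝ → Fin n → ℝ) (h𝓘 : ∃ C : ℝ, ∀ t : ℝ, 0 ≤ t → ‖𝓘 t‖ ≤ C)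
    (Ω𝓘 : Set (Fin n → ℝ))
    (hΩ𝓘 : Ω𝓘 = {x | ∃ I ∈ Ω, ∃ t : ℝ, 0 ≤ t ∧ x = I + 𝓘 t})
    (G : (Fin n → ℝ) → (Fin n → ℝ) → ℂ)
    (hGcont : ContinuousOn (fun q : (Fin n → ℝ) × (Fin n → ℝ) => G q.1 q.2)
      (Ω𝓘 ×ˢ (Set.univ : Set (Fin n → ℝ))))
    (hGbdd : ∃ M : ℝ, ∀ I ∈ Ω𝓘, ∀ θ, ‖G I θ‖ ≤ M)
    (hGper : ∀ I θ (i : Fin n), G I (θ + fun j => if j = i then 2 * Real.pi else 0) = G I θ)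
    (f₀ : (Fin n → ℝ) → (Fin n → ℝ) → ℂ)
    (hf₀cont : Continuous (fun q : (Fin n → ℝ) × (Fin n → ℝ) => f₀ q.1 q.2))
    (hf₀supp : HasCompactSupport (fun q : (Fin n → ℝ) × (Fin n → ℝ) => f₀ q.1 q.2))
    (hf₀dom : ∀ q : (Fin n → ℝ) × (Fin n → ℝ),
      f₀ q.1 q.2 ≠ 0 → q.1 ∈ Ω ∧ q.2 ∈ torusBox n)
    (t : ℝ) (ht : 0 ≤ t) :
    (∫⁻ I in Ω, ∑' v : Fin n → ℤ,
        (‖fourierCoeff' G (I + 𝓘 t) v‖₊ * ‖fourierCoeff' f₀ I (-v)‖₊ : ENNReal)) < ⊤ :=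
  fourier_series_integral_finite_general Ω hΩ 𝓘 Ω𝓘 hΩ𝓘 G hGcont hGbdd f₀ hf₀cont hf₀supp t ht
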